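/- arXiv:2504.20243 — 5 statements merged into one kernel-verified Lean document; each statement's English description precedes it below -/
import Mathlib

section
/- For any formal differential operator L = d^n/dx^n + Σ_{i=0}^{n-2} u_i(x) d^i/dx^i with formal power series coefficients u_i, and any fixed base point x_0, there exists a unique formal solution ψ(x,k) = (Σ_{s=0}^∞ ξ_s(x) k^{-s}) e^{k(x-x_0)} of the equation Lψ = k^n ψ (as an identity of formal series in k^{-1} times the exponential) satisfying the normalization ξ_0 ≡ 1 and ξ_s(x_0) = 0 for all s ≥ 1. -/
open scoped BigOperators

/-- Extension of a one-sided sequence of coefficient functions `ξ_s`, `s ∈ ℕ`, to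
`ℤ`-indexed Laurent coefficients (in the variable `k⁻¹`), zero in negative degrees. -/
noncomputable def extSeq (ξ : ℕ → ℂ → ℂ) : ℤ → ℂ → ℂ :=
  fun s => if 0 ≤ s then ξ s.toNat else 0

/-- The operation corresponding to `d/dx` acting on a series
`Σ_s η_s(x) k^{-s} e^{k(x-x₀)}`, recorded on the `ℤ`-indexed coefficients, via
`d/dx (η_s k^{-s} e^{k(x-x₀)}) = (η_s' + k·η_s) k^{-s} e^{k(x-x₀)}`. -/
noncomputable def seriesDeriv (η : ℤ → ℂ → ℂ) : ℤ → ℂ → ℂ :=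
  fun s x => deriv (η s) x + η (s + 1) x

/-- The `ℤ`-indexed coefficients of `L(Σ η_s k^{-s} e^{k(x-x₀)})` for the canonical-form
operator `L = d^n/dx^n + Σ_{i=0}^{n-2} u_i(x) d^i/dx^i`. -/
noncomputable def applyL (n : ℕ) (u : ℕ → ℂ → ℂ) (η : ℤ → ℂ → ℂ) : ℤ → ℂ → ℂ :=
  fun s x => (seriesDeriv^[n] η) s x +
    ∑ i ∈ Finset.range (n - 1), u i x * (seriesDeriv^[i] η) s x

/-!
Write `ψ = (Σ ξ_s k^{-s}) e^{k(x-x₀)}`. Since `d/dx` raises the `k`-degree by at most one and `L`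
has no `d^{n-1}/dx^{n-1}` term, the coefficient of `k^{n-1-c}` in `Lψ - k^n ψ` is
`n ξ_c' + (terms in ξ_0, …, ξ_{c-1})`. So `Lψ = k^n ψ` is a recursion prescribing `ξ_{m+1}'` in
terms of `ξ_0, …, ξ_m`, and `ξ_{m+1}(x₀) = 0` fixes the constant of integration. The entire
primitive is given by Morera's theorem (`Complex.wedgeIntegral`).
-/

open Set

section Recursion

variable {α : Type*}

def seqOfRecursion (a : α) (next : (ℕ → α) → ℕ → α) : ℕ → α
  | 0 => a
  | m + 1 => next (fun j => if _ : j ≤ m then seqOfRecursion a next j else a) m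

theorem existsUnique_of_recursion (a : α) (next : (ℕ → α) → ℕ → α)
    (hnext : ∀ ξ ξ' m, (∀ j ≤ m, ξ j = ξ' j) → next ξ m = next ξ' m) :
    ∃! ξ : ℕ → α, ξ 0 = a ∧ ∀ m, ξ (m + 1) = next ξ m := by
  refine ⟨seqOfRecursion a next, ⟨by rw [seqOfRecursion], fun m => ?_⟩, ?_⟩
  · rw [seqOfRecursion]
    exact hnext _ _ m fun j hj => by simp [hj]
  · rintro ξ ⟨h0, hsucc⟩
    funext m
    induction m using Nat.strong_induction_on with
    | _ m ih =>
      cases m with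
      | zero => rw [h0, seqOfRecursion]
      | succ m =>
        rw [hsucc, seqOfRecursion]
        exact hnext _ _ m fun j hj => by simp [hj, ih j (by omega)]

end Recursion

theorem eq_of_forall_hasDerivAt {𝕜 G : Type*} [NontriviallyNormedField 𝕜] [IsRCLikeNormedField 𝕜]
    [NormedAddCommGroup G] [NormedSpace 𝕜 G] {f g f' : 𝕜 → G}
    (hf : ∀ x, HasDerivAt f (f' x) x) (hg : ∀ x, HasDerivAt g (f' x) x) (x₀ : 𝕜)
    (h : f x₀ = g x₀) : f = g :=
  eq_of_fderiv_eq (fun x => (hf x).differentiableAt) (fun x => (hg x).differentiableAt)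
    (fun x => (hf x).hasFDerivAt.fderiv.trans (hg x).hasFDerivAt.fderiv.symm) x₀ h

namespace Complex

variable {E : Type*} [NormedAddCommGroup E] [NormedSpace ℂ E]

theorem wedgeIntegral_self (z : ℂ) (f : ℂ → E) : wedgeIntegral z z f = 0 := by
  simp [wedgeIntegral]

theorem _root_.Differentiable.hasDerivAt_wedgeIntegral [CompleteSpace E] {f : ℂ → E} (hf : Differentiable ℂ f)
    (c z : ℂ) : HasDerivAt (fun w => wedgeIntegral c w f) (f z) z :=
  (hf.differentiableOn (s := Metric.ball c (dist z c + 1))).isConservativeOn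
    |>.hasDerivAt_wedgeIntegral hf.continuous.continuousOn (by simp)

end Complex

section SeriesDeriv

variable {η α β : ℤ → ℂ → ℂ}

theorem differentiable_seriesDeriv (hη : ∀ t, Differentiable ℂ (η t)) (t : ℤ) :
    Differentiable ℂ (seriesDeriv η t) :=
  (hη t).deriv.add (hη (t + 1))

theorem differentiable_seriesDeriv_iterate (hη : ∀ t, Differentiable ℂ (η t)) (m : ℕ) (t : ℤ) :
    Differentiable ℂ (seriesDeriv^[m] η t) := by
  induction m generalizing t with
  | zero => exact hη t
  | succ m ih => rw [Function.iterate_succ_apply']; exact differentiable_seriesDeriv ih t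

theorem seriesDeriv_add (hα : ∀ t, Differentiable ℂ (α t)) (hβ : ∀ t, Differentiable ℂ (β t)) :
    seriesDeriv (α + β) = seriesDeriv α + seriesDeriv β := by
  funext t x
  simp only [seriesDeriv, Pi.add_apply, deriv_add (hα t x) (hβ t x)]
  ring

theorem seriesDeriv_iterate_add (hα : ∀ t, Differentiable ℂ (α t))
    (hβ : ∀ t, Differentiable ℂ (β t)) (m : ℕ) :
    seriesDeriv^[m] (α + β) = seriesDeriv^[m] α + seriesDeriv^[m] β := by
  induction m with
  | zero => rfl
  | succ m ih =>
    simp only [Function.iterate_succ_apply', ih]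
    exact seriesDeriv_add (differentiable_seriesDeriv_iterate hα m)
      (differentiable_seriesDeriv_iterate hβ m)

theorem seriesDeriv_iterate_of_add_le {c : ℤ} (hη : ∀ t < c, η t = 0) (m : ℕ) {s : ℤ}
    (hs : s + m ≤ c) : seriesDeriv^[m] η s = η (s + m) := by
  induction m generalizing s with
  | zero => simp
  | succ m ih =>
    funext x
    rw [Function.iterate_succ_apply', seriesDeriv, ih (by omega), ih (by omega),
      hη (s + m) (by omega)]
    simp [add_assoc, add_comm (1 : ℤ)]

theorem seriesDeriv_iterate_of_add_eq {c : ℤ} (hη : ∀ t < c, η t = 0) (m : ℕ) {s : ℤ}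
    (hs : s + m = c + 1) :
    seriesDeriv^[m] η s = fun x => η (c + 1) x + m * deriv (η c) x := by
  induction m generalizing s with
  | zero => funext x; simp [← hs]
  | succ m ih =>
    funext x
    rw [Function.iterate_succ_apply', seriesDeriv,
      seriesDeriv_iterate_of_add_le hη m (s := s) (by omega), ih (s := s + 1) (by omega),
      show s + m = c by omega]
    push_cast
    ring

end SeriesDeriv

section ApplyL

variable {n : ℕ} {u : ℕ → ℂ → ℂ} {η α β : ℤ → ℂ → ℂ}

theorem differentiable_applyL (hu : ∀ i, Differentiable ℂ (u i))
    (hη : ∀ t, Differentiable ℂ (η t)) (s : ℤ) : Differentiable ℂ (applyL n u η s) :=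
  (differentiable_seriesDeriv_iterate hη n s).add <|
    Differentiable.fun_sum fun i _ => (hu i).mul (differentiable_seriesDeriv_iterate hη i s)

theorem applyL_add (hα : ∀ t, Differentiable ℂ (α t)) (hβ : ∀ t, Differentiable ℂ (β t)) :
    applyL n u (α + β) = applyL n u α + applyL n u β := by
  funext s x
  simp only [applyL, seriesDeriv_iterate_add hα hβ, Pi.add_apply, mul_add, Finset.sum_add_distrib]
  ring

theorem applyL_of_forall_lt_eq_zero {c : ℤ} (hη : ∀ t < c, η t = 0) {s : ℤ} (hs : s + n = c + 1) :
    applyL n u η s = fun x => η (c + 1) x + n * deriv (η c) x := by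
  funext x
  have hlow : ∑ i ∈ Finset.range (n - 1), u i x * seriesDeriv^[i] η s x = 0 :=
    Finset.sum_eq_zero fun i hi => by
      rw [Finset.mem_range] at hi
      rw [seriesDeriv_iterate_of_add_le hη i (by omega), hη _ (by omega), Pi.zero_apply, mul_zero]
  rw [applyL, seriesDeriv_iterate_of_add_eq hη n hs, hlow, add_zero]

theorem applyL_zero (n : ℕ) (u : ℕ → ℂ → ℂ) : applyL n u 0 = 0 := by
  funext s x
  simpa using congrFun (applyL_of_forall_lt_eq_zero (n := n) (u := u) (η := 0)
    (c := s + n - 1) (fun _ _ => rfl) (by omega)) x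

/-- Since `L` has no `d^{n-1}/dx^{n-1}` term, only `d^n/dx^n` sees the coefficients `η_t` with
`t ≥ s + n - 1`. -/
theorem applyL_eq_add_deriv_add_applyL_indicator (hη : ∀ t, Differentiable ℂ (η t)) (s : ℤ) :
    applyL n u η s = fun x => η (s + n) x + n * deriv (η (s + n - 1)) x +
      applyL n u ((Iio (s + n - 1)).indicator η) s x := by
  set c := s + n - 1 with hc
  have hdiff : ∀ (S : Set ℤ) t, Differentiable ℂ (S.indicator η t) := fun S t => by
    by_cases ht : t ∈ S
    · simpa [ht] using hη t
    · simp [ht]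
  have hhigh := applyL_of_forall_lt_eq_zero (n := n) (u := u) (η := (Ici c).indicator η)
    (fun t ht => indicator_of_notMem (notMem_Ici.2 ht) _) (s := s) (by omega)
  conv_lhs =>
    rw [← (Iio c).indicator_self_add_compl η, compl_Iio, applyL_add (hdiff _) (hdiff _)]
  funext x
  rw [Pi.add_apply, Pi.add_apply, hhigh, indicator_of_mem (mem_Ici.2 (by omega)),
    indicator_of_mem (mem_Ici.2 le_rfl), show c + 1 = s + n by omega]
  ring

end ApplyL

section ExtSeq

variable {ξ ξ' : ℕ → ℂ → ℂ}

@[simp]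
theorem extSeq_natCast (m : ℕ) : extSeq ξ m = ξ m := by
  simp [extSeq]

theorem differentiable_extSeq (hξ : ∀ j, Differentiable ℂ (ξ j)) (t : ℤ) :
    Differentiable ℂ (extSeq ξ t) := by
  unfold extSeq
  split_ifs
  exacts [hξ _, differentiable_const 0]

theorem differentiable_indicator_Iio_extSeq {m : ℕ} (hξ : ∀ j ≤ m, Differentiable ℂ (ξ j))
    (t : ℤ) : Differentiable ℂ ((Iio ((m : ℤ) + 1)).indicator (extSeq ξ) t) := by
  simp only [indicator_apply, mem_Iio, extSeq]
  split_ifs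
  exacts [hξ _ (by omega), differentiable_const 0, differentiable_const 0]

theorem indicator_Iio_extSeq_congr {m : ℕ} (h : ∀ j ≤ m, ξ j = ξ' j) :
    (Iio ((m : ℤ) + 1)).indicator (extSeq ξ) = (Iio ((m : ℤ) + 1)).indicator (extSeq ξ') := by
  funext t
  simp only [indicator_apply, mem_Iio, extSeq]
  split_ifs
  exacts [h _ (by omega), rfl, rfl]

theorem indicator_Iio_extSeq_of_nonpos {c : ℤ} (hc : c ≤ 0) :
    (Iio c).indicator (extSeq ξ) = 0 := by
  funext t
  simp only [indicator_apply, mem_Iio, extSeq]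
  split_ifs
  exacts [by omega, rfl, rfl]

theorem deriv_extSeq_of_nonpos (h0 : ξ 0 = fun _ => 1) {c : ℤ} (hc : c ≤ 0) :
    deriv (extSeq ξ c) = 0 := by
  unfold extSeq
  split_ifs
  · rw [show c.toNat = 0 by omega, h0, deriv_const']; rfl
  · exact deriv_const' 0

end ExtSeq

section Eigenfunction

variable {n : ℕ} {u : ℕ → ℂ → ℂ} {ξ : ℕ → ℂ → ℂ}

variable (n u) in
/-- `ξ_{m+1}'` as forced by the coefficient of `k^{n-2-m}` in `Lψ = k^n ψ`; the indicator keeps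
exactly `ξ_0, …, ξ_m`. -/
noncomputable def nextCoeffDeriv (ξ : ℕ → ℂ → ℂ) (m : ℕ) : ℂ → ℂ :=
  fun x => -(n : ℂ)⁻¹ *
    applyL n u ((Iio ((m : ℤ) + 1)).indicator (extSeq ξ)) ((m : ℤ) + 2 - n) x

variable (n u) in
noncomputable def nextCoeff (x₀ : ℂ) (ξ : ℕ → ℂ → ℂ) (m : ℕ) : ℂ → ℂ :=
  fun z => Complex.wedgeIntegral x₀ z (nextCoeffDeriv n u ξ m)

theorem nextCoeff_congr {ξ' : ℕ → ℂ → ℂ} {m : ℕ} (x₀ : ℂ) (h : ∀ j ≤ m, ξ j = ξ' j) :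
    nextCoeff n u x₀ ξ m = nextCoeff n u x₀ ξ' m := by
  unfold nextCoeff nextCoeffDeriv
  rw [indicator_Iio_extSeq_congr h]

theorem hasDerivAt_nextCoeff (hu : ∀ i, Differentiable ℂ (u i)) {m : ℕ}
    (hξ : ∀ j ≤ m, Differentiable ℂ (ξ j)) (x₀ x : ℂ) :
    HasDerivAt (nextCoeff n u x₀ ξ m) (nextCoeffDeriv n u ξ m x) x :=
  ((differentiable_applyL hu (differentiable_indicator_Iio_extSeq hξ) _).const_mul _
    ).hasDerivAt_wedgeIntegral x₀ x

theorem applyL_extSeq_eq_iff (hn : 1 ≤ n) (hξ : ∀ j, Differentiable ℂ (ξ j))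
    (h0 : ξ 0 = fun _ => 1) :
    (∀ (s : ℤ) (x : ℂ), applyL n u (extSeq ξ) s x = extSeq ξ (s + n) x) ↔
      ∀ m, deriv (ξ (m + 1)) = nextCoeffDeriv n u ξ m := by
  have hn₀ : (n : ℂ) ≠ 0 := Nat.cast_ne_zero.2 (by omega)
  have hsplit : ∀ s x, applyL n u (extSeq ξ) s x = extSeq ξ (s + n) x ↔
      n * deriv (extSeq ξ (s + n - 1)) x +
        applyL n u ((Iio (s + n - 1)).indicator (extSeq ξ)) s x = 0 := fun s x => by
    rw [applyL_eq_add_deriv_add_applyL_indicator (differentiable_extSeq hξ)]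
    constructor <;> intro h <;> linear_combination h
  rw [forall₂_congr hsplit]
  constructor
  · intro h m
    funext x
    have hm := h ((m : ℤ) + 2 - n) x
    rw [show (m : ℤ) + 2 - n + n - 1 = (m + 1 : ℕ) by push_cast; ring, extSeq_natCast] at hm
    rw [nextCoeffDeriv]
    field_simp
    push_cast at hm
    linear_combination hm
  · intro h s x
    rcases le_or_gt (s + n - 1) 0 with hc | hc
    · simp [deriv_extSeq_of_nonpos h0 hc, indicator_Iio_extSeq_of_nonpos hc, applyL_zero]
    · obtain ⟨m, hm⟩ : ∃ m : ℕ, s = (m : ℤ) + 2 - n := ⟨(s + n - 2).toNat, by omega⟩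
      subst hm
      rw [show (m : ℤ) + 2 - n + n - 1 = (m + 1 : ℕ) by push_cast; ring, extSeq_natCast, h m,
        nextCoeffDeriv]
      push_cast
      field_simp
      ring

theorem differentiable_of_eq_nextCoeff (hu : ∀ i, Differentiable ℂ (u i)) {x₀ : ℂ}
    (h0 : ξ 0 = fun _ => 1) (hrec : ∀ m, ξ (m + 1) = nextCoeff n u x₀ ξ m) (j : ℕ) :
    Differentiable ℂ (ξ j) := by
  induction j using Nat.strong_induction_on with
  | _ j ih =>
    cases j with
    | zero => rw [h0]; exact differentiable_const 1
    | succ m =>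
      rw [hrec]
      exact fun x => (hasDerivAt_nextCoeff hu (fun i hi => ih i (by omega)) x₀ x).differentiableAt

theorem normalized_eigenfunction_iff (hn : 1 ≤ n) (hu : ∀ i, Differentiable ℂ (u i)) (x₀ : ℂ) :
    ((∀ s, Differentiable ℂ (ξ s)) ∧ ξ 0 = (fun _ => 1) ∧ (∀ s, 1 ≤ s → ξ s x₀ = 0) ∧
      ∀ (s : ℤ) (x : ℂ), applyL n u (extSeq ξ) s x = extSeq ξ (s + n) x) ↔
      ξ 0 = (fun _ => 1) ∧ ∀ m, ξ (m + 1) = nextCoeff n u x₀ ξ m := by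
  constructor
  · rintro ⟨hξ, h0, hx₀, heq⟩
    refine ⟨h0, fun m => eq_of_forall_hasDerivAt (fun x => ?_)
      (hasDerivAt_nextCoeff hu (fun j _ => hξ j) x₀) x₀ ?_⟩
    · rw [← (applyL_extSeq_eq_iff hn hξ h0).1 heq m]
      exact (hξ _ x).hasDerivAt
    · rw [hx₀ _ m.succ_pos, nextCoeff, Complex.wedgeIntegral_self]
  · rintro ⟨h0, hrec⟩
    have hξ := differentiable_of_eq_nextCoeff hu h0 hrec
    refine ⟨hξ, h0, fun s hs => ?_, (applyL_extSeq_eq_iff hn hξ h0).2 fun m => ?_⟩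
    · obtain ⟨m, rfl⟩ := Nat.exists_eq_add_of_le' hs
      rw [hrec, nextCoeff, Complex.wedgeIntegral_self]
    · funext x
      rw [hrec m]
      exact (hasDerivAt_nextCoeff hu (fun j _ => hξ j) x₀ x).deriv

end Eigenfunction

/-- For any formal differential operator `L = d^n/dx^n + Σ_{i=0}^{n-2} u_i(x) d^i/dx^i`
and any base point `x₀`, there exists a unique normalized formal solution
`ψ(x,k) = (Σ_{s≥0} ξ_s(x) k^{-s}) e^{k(x-x₀)}` of `Lψ = k^n ψ` (the equation being read
coefficientwise in powers of `k`), with `ξ_0 ≡ 1` and `ξ_s(x₀) = 0` for `s ≥ 1`. -/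
theorem exists_unique_normalized_formal_eigenfunction
    (n : ℕ) (hn : 1 ≤ n) (u : ℕ → ℂ → ℂ) (hu : ∀ i, Differentiable ℂ (u i))
    (x0 : ℂ) :
    ∃! ξ : ℕ → ℂ → ℂ,
      (∀ s, Differentiable ℂ (ξ s)) ∧
      ξ 0 = (fun _ => 1) ∧
      (∀ s, 1 ≤ s → ξ s x0 = 0) ∧
      (∀ (s : ℤ) (x : ℂ), applyL n u (extSeq ξ) s x = extSeq ξ (s + n) x) :=
  (existsUnique_congr fun _ => normalized_eigenfunction_iff hn hu x0).2 <|
    existsUnique_of_recursion _ _ fun _ _ _ => nextCoeff_congr x0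
end

section
/- For any two pseudo-differential operators D_1, D_2 in one variable x, the identity Res_k((e^{−kx} D_1)(D_2 e^{kx})) = Res_{∂_x}(D_2 D_1) holds, where Res_k extracts the coefficient of k^{-1} in the resulting formal series in k, the left action of ∂_x on e^{-kx} is formal adjoint (so (e^{-kx})∂_x = -∂_x(e^{-kx}) = k e^{-kx}), and Res_{∂_x} extracts the coefficient of ∂_x^{-1}. -/
open scoped BigOperators

/-- The generalized binomial coefficient `C(m,j) = m(m−1)⋯(m−j+1)/j!` for `m ∈ ℤ`. -/
noncomputable def genBinom (m : ℤ) (j : ℕ) : ℂ :=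
  (∏ t ∈ Finset.range j, ((m : ℤ) - (t : ℤ) : ℂ)) / (Nat.factorial j : ℂ)

/-- Product of pseudo-differential operators (coefficients of `∂ₓ^i`, `i ∈ ℤ`), given by
the generalized Leibniz rule. -/
noncomputable def pdoMul (P Q : ℤ → ℂ → ℂ) : ℤ → ℂ → ℂ :=
  fun i x => ∑ᶠ (m : ℤ), ∑ᶠ (j : ℕ),
    genBinom m j * P m x * iteratedDeriv j (Q (i - m + j)) x

/-- The coefficient of `k^m` in `e^{kx}·((e^{-kx})P)`, where the operator `P` acts on
`e^{-kx}` from the left via the formal adjoint action, so `(e^{-kx})∂ₓ = k e^{-kx}`: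
explicitly `(e^{-kx})(b_i ∂ₓ^i) = Σ_j C(i,j) k^{i-j} (−1)^j b_i^{(j)} e^{-kx}`. -/
noncomputable def leftSym (P : ℤ → ℂ → ℂ) : ℤ → ℂ → ℂ :=
  fun m x => ∑ᶠ (j : ℕ),
    genBinom (m + j) j * (-1 : ℂ) ^ j * iteratedDeriv j (P (m + j)) x

/-! Reindexing `m ↦ -1 - m` matches the two residues term by term: the coefficients agree by
upper negation of binomial coefficients, `C(-1-m, j) = (-1)^j C(m+j, j)`. -/

theorem genBinom_eq_descPochhammer_eval (m : ℤ) (j : ℕ) :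
    genBinom m j = (descPochhammer ℂ j).eval (m : ℂ) / j.factorial := by
  simp [genBinom, descPochhammer_eval_eq_prod_range]

theorem genBinom_neg_one_sub (m : ℤ) (j : ℕ) :
    genBinom (-1 - m) j = (-1) ^ j * genBinom (m + j) j := by
  rw [genBinom_eq_descPochhammer_eval, genBinom_eq_descPochhammer_eval, mul_div_assoc',
    descPochhammer_eval_eq_ascPochhammer, ← ascPochhammer_eval_neg_eq_descPochhammer]
  congr 2
  push_cast
  ring

theorem residue_pairing_general
    (D1 D2 : ℤ → ℂ → ℂ) :
    ∀ x : ℂ, (∑ᶠ m : ℤ, leftSym D1 m x * D2 (-1 - m) x) = pdoMul D2 D1 (-1) x := by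
  intro x
  rw [pdoMul]
  conv_rhs => rw [← finsum_comp_equiv (Equiv.subLeft (-1 : ℤ))]
  refine finsum_congr fun m => ?_
  rw [leftSym, finsum_mul]
  refine finsum_congr fun j => ?_
  rw [Equiv.subLeft_apply, sub_sub_cancel, genBinom_neg_one_sub]
  ring

/-- For any two pseudo-differential operators `D₁, D₂`,
`Res_k((e^{−kx}D₁)(D₂e^{kx})) = Res_{∂ₓ}(D₂D₁)`: the coefficient of `k^{-1}` in the
product of the formal series `e^{-kx}D₁` and `D₂e^{kx}` (whose `k^l` coefficient is
`D₂ l`) equals the coefficient of `∂ₓ^{-1}` in the operator product `D₂D₁`. -/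
theorem residue_pairing
    (D1 D2 : ℤ → ℂ → ℂ)
    (hD1 : ∀ i, ContDiff ℂ ⊤ (D1 i)) (hD2 : ∀ i, ContDiff ℂ ⊤ (D2 i))
    (N1 N2 : ℤ)
    (hN1 : ∀ i : ℤ, N1 < i → D1 i = 0) (hN2 : ∀ i : ℤ, N2 < i → D2 i = 0) :
    ∀ x : ℂ, (∑ᶠ m : ℤ, leftSym D1 m x * D2 (-1 - m) x) = pdoMul D2 D1 (-1) x :=
  residue_pairing_general D1 D2
end

section
/- Suppose the meromorphic potential u(x,y) has Laurent expansion u = −2/(x−x̃(y))^2 + v(y) + w(y)(x−x̃(y)) + … and ψ = α(y)/(x−x̃(y)) + β(y) + γ(y)(x−x̃(y)) + δ(y)(x−x̃(y))^2 + … with α(y) ≠ 0 is a solution of (∂_x^2 + u)ψ = ∂_y ψ. Then matching the coefficients of (x−x̃)^{-2}, (x−x̃)^{-1}, (x−x̃)^0 yields αẋ̃ + 2β = 0, −α̇ + αv − 2γ = 0, −β̇ + γẋ̃ + βv + αw = 0, and these three relations together imply ẍ̃ = −2w (dots denote y-derivatives). -/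
/-!
Since `cᵢ = 0` for `i < -2` and `aⱼ = 0` for `j < -1`, the coefficient equation at `t` is a
finite identity; at `t = -2, -1, 0` it gives the three relations (at `t = 0` the two `a₂` terms
cancel). Differentiating the first, `β̇ = -(α̇ ẋ̃ + α ẍ̃) / 2`; substituting this and
`γ = (αv - α̇) / 2` into the third leaves `α (ẍ̃ + 2w) / 2 = 0`, and `α ≠ 0`.
-/

theorem finsum_mul_sub_eq_sum_range {R : Type*} [NonUnitalNonAssocSemiring R]
    (c a : ℤ → R) (m n t : ℤ) (hc : ∀ i, i < m → c i = 0)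
    (ha : ∀ j, j < n → a j = 0) :
    ∑ᶠ i : ℤ, c i * a (t - i) =
      ∑ k ∈ Finset.range (t - m - n + 1).toNat, c (m + k) * a (t - (m + k)) := by
  have hsupp : (Function.support fun i => c i * a (t - i)) ⊆ Finset.Ico m (t - n + 1) := by
    intro i hi
    simp only [Finset.coe_Ico, Set.mem_Ico]
    by_contra h
    rcases not_and_or.mp h with h | h
    · exact hi (by simp [hc i (not_le.mp h)])
    · exact hi (by simp [ha (t - i) (by omega)])
  rw [finsum_eq_finsetSum_of_support_subset _ hsupp, Int.Ico_eq_finset_map, Finset.sum_map,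
    show t - n + 1 - m = t - m - n + 1 by ring]
  rfl

theorem deriv_deriv_eq_neg_two_mul_of_matching {xt α β γ v w : ℂ → ℂ} {y : ℂ}
    (hα : α y ≠ 0) (hdα : DifferentiableAt ℂ α y) (hdx' : DifferentiableAt ℂ (deriv xt) y)
    (h₁ : ∀ y, α y * deriv xt y + 2 * β y = 0)
    (h₂ : ∀ y, -deriv α y + α y * v y - 2 * γ y = 0)
    (h₃ : ∀ y, -deriv β y + γ y * deriv xt y + β y * v y + α y * w y = 0) :
    deriv (deriv xt) y = -2 * w y := by
  have hβ : β = fun y => -(α y * deriv xt y) / 2 := by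
    funext z
    linear_combination h₁ z / 2
  have hdβ : deriv β y = -(deriv α y * deriv xt y + α y * deriv (deriv xt) y) / 2 := by
    rw [hβ]
    exact ((hdα.hasDerivAt.mul hdx'.hasDerivAt).neg.div_const 2).deriv
  have key : α y * (deriv (deriv xt) y + 2 * w y) = 0 := by
    linear_combination 2 * h₃ y + 2 * hdβ + deriv xt y * h₂ y - v y * h₁ y
  linear_combination (mul_eq_zero.mp key).resolve_left hα

theorem laurent_matching_flex_general
    (xt α β γ v w : ℂ → ℂ)
    (a c : ℤ → ℂ → ℂ)
    (ha_neg : ∀ t : ℤ, t < -1 → a t = 0)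
    (ham1 : a (-1) = α) (ha0 : a 0 = β) (ha1 : a 1 = γ)
    (hc_neg : ∀ t : ℤ, t < -2 → c t = 0)
    (hcm2 : c (-2) = fun _ => (-2 : ℂ)) (hcm1 : c (-1) = 0)
    (hc0 : c 0 = v) (hc1 : c 1 = w)
    (hα : ∀ y, α y ≠ 0)
    (hdα : Differentiable ℂ α)
    (hdx' : Differentiable ℂ (deriv xt))
    (heq : ∀ (t : ℤ) (y : ℂ),
      ((t + 2 : ℤ) : ℂ) * ((t + 1 : ℤ) : ℂ) * a (t + 2) y
          + (∑ᶠ i : ℤ, c i y * a (t - i) y)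
        = deriv (a t) y - ((t + 1 : ℤ) : ℂ) * a (t + 1) y * deriv xt y) :
    (∀ y, α y * deriv xt y + 2 * β y = 0) ∧
    (∀ y, -deriv α y + α y * v y - 2 * γ y = 0) ∧
    (∀ y, -deriv β y + γ y * deriv xt y + β y * v y + α y * w y = 0) ∧
    (∀ y, deriv (deriv xt) y = -2 * w y) := by
  have hsum (t : ℤ) (y : ℂ) := finsum_mul_sub_eq_sum_range (c · y) (a · y) (-2) (-1) t
    (fun i hi => by simp [hc_neg i hi]) (fun j hj => by simp [ha_neg j hj])
  -- `↓` rewrites the `finsum` before `simp` turns `0 - i` into `-i`.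
  have h₁ : ∀ y, α y * deriv xt y + 2 * β y = 0 := fun y => by
    have h : -2 * β y = α y * deriv xt y := by
      simpa [↓hsum, Finset.sum_range_succ, hcm2, hcm1, ham1, ha0, ha_neg (-2)] using heq (-2) y
    linear_combination -h
  have h₂ : ∀ y, -deriv α y + α y * v y - 2 * γ y = 0 := fun y => by
    have h : -2 * γ y + v y * α y = deriv α y := by
      simpa [↓hsum, Finset.sum_range_succ, hcm2, hcm1, hc0, ham1, ha0, ha1] using heq (-1) y
    linear_combination h
  have h₃ : ∀ y, -deriv β y + γ y * deriv xt y + β y * v y + α y * w y = 0 := fun y => by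
    have h : 2 * a 2 y + (-2 * a 2 y + v y * β y + w y * α y) =
        deriv β y - γ y * deriv xt y := by
      simpa [↓hsum, Finset.sum_range_succ, hcm2, hcm1, hc0, hc1, ham1, ha0, ha1] using heq 0 y
    linear_combination h
  exact ⟨h₁, h₂, h₃, fun y =>
    deriv_deriv_eq_neg_two_mul_of_matching (hα y) (hdα y) (hdx' y) h₁ h₂ h₃⟩

/-- Suppose `u = −2/(x−x̃(y))² + v(y) + w(y)(x−x̃(y)) + …` and
`ψ = α/(x−x̃) + β + γ(x−x̃) + δ(x−x̃)² + …` (encoded by their Laurent coefficients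
`c, a : ℤ → (ℂ → ℂ)` in powers of `x − x̃(y)`), with `α(y) ≠ 0`, and `ψ` solves
`(∂ₓ² + u)ψ = ∂_yψ`; the equation reads, on the coefficient of `(x−x̃)^t`:
`(t+2)(t+1)a_{t+2} + Σ_i c_i a_{t−i} = ȧ_t − (t+1)a_{t+1}·x̃̇`. Then matching the
coefficients of `(x−x̃)^{-2}, (x−x̃)^{-1}, (x−x̃)^0` yields `αx̃̇ + 2β = 0`,
`−α̇ + αv − 2γ = 0`, `−β̇ + γx̃̇ + βv + αw = 0`, and these relations imply
`x̃̈ = −2w` (dots denote `y`-derivatives). -/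
theorem laurent_matching_flex
    (xt α β γ δ v w : ℂ → ℂ)
    (a c : ℤ → ℂ → ℂ)
    (ha_neg : ∀ t : ℤ, t < -1 → a t = 0)
    (ham1 : a (-1) = α) (ha0 : a 0 = β) (ha1 : a 1 = γ) (ha2 : a 2 = δ)
    (hc_neg : ∀ t : ℤ, t < -2 → c t = 0)
    (hcm2 : c (-2) = fun _ => (-2 : ℂ)) (hcm1 : c (-1) = 0)
    (hc0 : c 0 = v) (hc1 : c 1 = w)
    (hα : ∀ y, α y ≠ 0)
    (hdα : Differentiable ℂ α) (hdβ : Differentiable ℂ β)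
    (hdx : Differentiable ℂ xt) (hdx' : Differentiable ℂ (deriv xt))
    (heq : ∀ (t : ℤ) (y : ℂ),
      ((t + 2 : ℤ) : ℂ) * ((t + 1 : ℤ) : ℂ) * a (t + 2) y
          + (∑ᶠ i : ℤ, c i y * a (t - i) y)
        = deriv (a t) y - ((t + 1 : ℤ) : ℂ) * a (t + 1) y * deriv xt y) :
    (∀ y, α y * deriv xt y + 2 * β y = 0) ∧
    (∀ y, -deriv α y + α y * v y - 2 * γ y = 0) ∧
    (∀ y, -deriv β y + γ y * deriv xt y + β y * v y + α y * w y = 0) ∧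
    (∀ y, deriv (deriv xt) y = -2 * w y) :=
  laurent_matching_flex_general xt α β γ v w a c ha_neg ham1 ha0 ha1 hc_neg hcm2 hcm1 hc0 hc1 hα hdα
    hdx' heq
end

section
/- Let τ(x,y) be a function with a simple zero at x = x_i(y) and u = 2∂_x^2 ln τ have Laurent expansion u = −2/(x−x_i)^2 + v_i(y) + w_i(y)(x−x_i) + …, and suppose ξ_s has Laurent expansion ξ_s = r_{s,-1}/(x−x_i) + r_{s,0} + r_{s,1}(x−x_i) + …. If the next coefficient ξ_{s+1} is determined by the recursion 2∂_x ξ_{s+1} = ∂_y ξ_s − ∂_x^2 ξ_s − (u−b)ξ_s, then the Laurent coefficients satisfy 2r_{s+1,-1} = −ẋ_i r_{s,-1} − 2r_{s,0} and 2r_{s+1,1} = ṙ_{s,0} − ẋ_i r_{s,1} − w_i r_{s,-1} − (v_i − b)r_{s,0}; moreover, assuming ẍ_i = −2w_i and the residue condition ṙ_{s,-1} − (v_i−b)r_{s,-1} + 2r_{s,1} = 0 holds at level s, the same residue condition holds at level s+1: ṙ_{s+1,-1} − (v_i−b)r_{s+1,-1} + 2r_{s+1,1} = 0. -/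
open scoped BigOperators

/-- Let `u = 2∂ₓ² ln τ` have Laurent expansion `−2/(x−x_i)² + v_i(y) + w_i(y)(x−x_i)+…`
around a simple zero `x_i(y)` of `τ` (coefficients `c : ℤ → (ℂ → ℂ)`), and let the
Laurent coefficients of `ξ_s` and `ξ_{s+1}` (in powers of `x−x_i`, simple poles) be
`A, B : ℤ → (ℂ → ℂ)`, so `r_{s,j} = A j`, `r_{s+1,j} = B j`. If `ξ_{s+1}` is determined
from `ξ_s` by the recursion `2∂ₓξ_{s+1} = ∂_yξ_s − ∂ₓ²ξ_s − (u−b)ξ_s` (written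
coefficientwise), then `2r_{s+1,-1} = −ẋ_i r_{s,-1} − 2r_{s,0}` and
`2r_{s+1,1} = ṙ_{s,0} − ẋ_i r_{s,1} − w_i r_{s,-1} − (v_i−b)r_{s,0}`; moreover if
`ẍ_i = −2w_i` and the residue condition `ṙ_{s,-1} − (v_i−b)r_{s,-1} + 2r_{s,1} = 0`
holds, then the residue condition also holds at level `s+1`. -/
theorem laurent_recursion_residue
    (xi vi wi : ℂ → ℂ) (b : ℂ)
    (c : ℤ → ℂ → ℂ)
    (hc_neg : ∀ t : ℤ, t < -2 → c t = 0)
    (hcm2 : c (-2) = fun _ => (-2 : ℂ)) (hcm1 : c (-1) = 0)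
    (hc0 : c 0 = vi) (hc1 : c 1 = wi)
    (A B : ℤ → ℂ → ℂ)
    (hA_neg : ∀ t : ℤ, t < -1 → A t = 0)
    (hB_neg : ∀ t : ℤ, t < -1 → B t = 0)
    (hdA : ∀ t : ℤ, Differentiable ℂ (A t))
    (hdx : Differentiable ℂ xi) (hdx' : Differentiable ℂ (deriv xi))
    (hrec : ∀ (t : ℤ) (y : ℂ),
      2 * ((t + 1 : ℤ) : ℂ) * B (t + 1) y
        = deriv (A t) y - ((t + 1 : ℤ) : ℂ) * A (t + 1) y * deriv xi y
          - ((t + 2 : ℤ) : ℂ) * ((t + 1 : ℤ) : ℂ) * A (t + 2) y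
          - ∑ᶠ i : ℤ, (c i y - if i = 0 then b else 0) * A (t - i) y) :
    (∀ y, 2 * B (-1) y = -(deriv xi y) * A (-1) y - 2 * A 0 y) ∧
    (∀ y, 2 * B 1 y = deriv (A 0) y - deriv xi y * A 1 y
        - wi y * A (-1) y - (vi y - b) * A 0 y) ∧
    (((∀ y, deriv (deriv xi) y = -2 * wi y) ∧
      (∀ y, deriv (A (-1)) y - (vi y - b) * A (-1) y + 2 * A 1 y = 0)) →
      ∀ y, deriv (B (-1)) y - (vi y - b) * B (-1) y + 2 * B 1 y = 0) := by
  -- finsum at t = -2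
  have hs1 : ∀ y, (∑ᶠ i : ℤ, (c i y - if i = 0 then b else 0) * A ((-2 : ℤ) - i) y)
      = -2 * A 0 y := by
    intro y
    rw [finsum_eq_finset_sum_of_support_subset _ (s := ({-2, -1} : Finset ℤ))]
    · rw [Finset.sum_insert (by decide), Finset.sum_singleton]
      rw [hcm2, hcm1]
      norm_num
    · intro i hi
      simp only [Function.mem_support, ne_eq] at hi
      simp only [Finset.coe_insert, Finset.coe_singleton, Set.mem_insert_iff,
        Set.mem_singleton_iff]
      by_contra hni
      push_neg at hni
      apply hi
      rcases lt_or_ge i (-2) with h | h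
      · rw [hc_neg i h]
        simp [show i ≠ 0 by omega]
      · rw [hA_neg _ (show (-2 : ℤ) - i < -1 by omega)]
        simp
  -- finsum at t = 0
  have hs2 : ∀ y, (∑ᶠ i : ℤ, (c i y - if i = 0 then b else 0) * A (-i) y)
      = -2 * A 2 y + (vi y - b) * A 0 y + wi y * A (-1) y := by
    intro y
    rw [finsum_eq_finset_sum_of_support_subset _ (s := ({-2, -1, 0, 1} : Finset ℤ))]
    · rw [Finset.sum_insert (by decide), Finset.sum_insert (by decide),
        Finset.sum_insert (by decide), Finset.sum_singleton]
      rw [hcm2, hcm1, hc0, hc1]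
      norm_num
      ring
    · intro i hi
      simp only [Function.mem_support, ne_eq] at hi
      simp only [Finset.coe_insert, Finset.coe_singleton, Set.mem_insert_iff,
        Set.mem_singleton_iff]
      by_contra hni
      push_neg at hni
      apply hi
      rcases lt_or_ge i (-2) with h | h
      · rw [hc_neg i h]
        simp [show i ≠ 0 by omega]
      · rw [hA_neg (-i) (by omega)]
        simp
  have h1 : ∀ y, 2 * B (-1) y = -(deriv xi y) * A (-1) y - 2 * A 0 y := by
    intro y
    have h := hrec (-2) y
    norm_num at h
    rw [hs1 y, hA_neg (-2) (by norm_num)] at h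
    rw [show deriv (0 : ℂ → ℂ) y = 0 from deriv_const y 0] at h
    linear_combination -h
  have h2 : ∀ y, 2 * B 1 y = deriv (A 0) y - deriv xi y * A 1 y
      - wi y * A (-1) y - (vi y - b) * A 0 y := by
    intro y
    have h := hrec 0 y
    norm_num at h
    rw [hs2 y] at h
    linear_combination h
  refine ⟨h1, h2, ?_⟩
  rintro ⟨hxx, hres⟩ y
  have hBfun : B (-1) = fun y => (-(deriv xi y) * A (-1) y - 2 * A 0 y) / 2 := by
    funext y
    have := h1 y
    field_simp
    linear_combination this
  have hD : deriv (B (-1)) y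
      = ((-(deriv (deriv xi) y) * A (-1) y + -(deriv xi y) * deriv (A (-1)) y)
          - 2 * deriv (A 0) y) / 2 := by
    rw [hBfun]
    exact ((((hdx' y).hasDerivAt.neg.mul ((hdA (-1)) y).hasDerivAt).sub
      (((hdA 0) y).hasDerivAt.const_mul 2)).div_const 2).deriv
  rw [hD]
  linear_combination (-(vi y - b) / 2) * h1 y + h2 y
    + (-(A (-1) y) / 2) * hxx y + (-(deriv xi y) / 2) * hres y
end

section
/- Assume Riemann's bilinear relation θ(τ, x+y)θ(τ, x−y) = Σ_{ε ∈ (1/2)(ℤ/2ℤ)^g} Θ[ε](τ,x)Θ[ε](τ,y), where Θ[ε](τ,z) := θ[ε;0](2τ, 2z), and assume the 2^g functions z ↦ Θ[ε](τ,z) are linearly independent. Then the functional equation A·θ(z)θ(z+p+r−s−q) + B·θ(z+p−q)θ(z+r−s) + C·θ(z+p−s)θ(z+r−q) = 0 for all z ∈ ℂ^g (with constants A, B, C not all zero and fixed vectors p,q,r,s ∈ ℂ^g) is equivalent to the single vector identity A·K((p+r−s−q)/2) + B·K((p+s−r−q)/2) + C·K((p+q−r−s)/2) = 0, where K(w) :=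 (Θ[ε](τ,w))_{ε} ∈ ℂ^{2^g} is the vector of second-order theta values; i.e., the three Kummer vectors are linearly dependent. -/
open scoped BigOperators

/-- The Riemann theta function `θ(τ,z) = Σ_{n ∈ ℤ^g} exp(πi nᵀ(τn + 2z))`. -/
noncomputable def riemannTheta {g : ℕ} (τ : Matrix (Fin g) (Fin g) ℂ)
    (z : Fin g → ℂ) : ℂ :=
  ∑' n : Fin g → ℤ, Complex.exp ((Real.pi : ℂ) * Complex.I *
    ((∑ i, ∑ j, (n i : ℂ) * τ i j * (n j : ℂ)) + 2 * ∑ i, (n i : ℂ) * z i))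

/-- The half-characteristic vector attached to `e ∈ (ℤ/2ℤ)^g` (encoded by booleans). -/
noncomputable def halfChar {g : ℕ} (e : Fin g → Bool) : Fin g → ℂ :=
  fun i => if e i then 1 / 2 else 0

/-- The second-order theta function `Θ[ε](τ,z) = θ[ε;0](2τ,2z)`. -/
noncomputable def theta2 {g : ℕ} (τ : Matrix (Fin g) (Fin g) ℂ) (e : Fin g → Bool)
    (z : Fin g → ℂ) : ℂ :=
  ∑' n : Fin g → ℤ, Complex.exp ((Real.pi : ℂ) * Complex.I *
    ((∑ i, ∑ j, ((n i : ℂ) + halfChar e i) * (2 * τ i j) * ((n j : ℂ) + halfChar e j))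
      + 2 * ∑ i, ((n i : ℂ) + halfChar e i) * (2 * z i)))

/-- Assuming Riemann's bilinear relation
`θ(x+y)θ(x−y) = Σ_ε Θ[ε](x)Θ[ε](y)` and the linear independence of the `2^g` functions
`Θ[ε]`, the functional equation
`A·θ(z)θ(z+p+r−s−q) + B·θ(z+p−q)θ(z+r−s) + C·θ(z+p−s)θ(z+r−q) = 0` for all `z` is
equivalent to the linear dependence of the three Kummer vectors:
`A·K((p+r−s−q)/2) + B·K((p+s−r−q)/2) + C·K((p+q−r−s)/2) = 0`, where
`K(w) = (Θ[ε](w))_ε ∈ ℂ^{2^g}`. -/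
theorem trisecant_functional_equation_iff_kummer {g : ℕ}
    (τ : Matrix (Fin g) (Fin g) ℂ)
    (hsym : τ.IsSymm) (hpos : (Matrix.of fun i j => (τ i j).im).PosDef)
    (hbil : ∀ x y : Fin g → ℂ,
      riemannTheta τ (x + y) * riemannTheta τ (x - y) =
        ∑ e : Fin g → Bool, theta2 τ e x * theta2 τ e y)
    (hind : LinearIndependent ℂ
      (fun e : Fin g → Bool => (theta2 τ e : (Fin g → ℂ) → ℂ)))
    (A B C : ℂ) (hABC : ¬ (A = 0 ∧ B = 0 ∧ C = 0))
    (p q r s : Fin g → ℂ) :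
    (∀ z : Fin g → ℂ,
        A * (riemannTheta τ z * riemannTheta τ (z + p + r - s - q)) +
        B * (riemannTheta τ (z + p - q) * riemannTheta τ (z + r - s)) +
        C * (riemannTheta τ (z + p - s) * riemannTheta τ (z + r - q)) = 0)
    ↔ (∀ e : Fin g → Bool,
        A * theta2 τ e ((1 / 2 : ℂ) • (p + r - s - q)) +
        B * theta2 τ e ((1 / 2 : ℂ) • (p + s - r - q)) +
        C * theta2 τ e ((1 / 2 : ℂ) • (p + q - r - s)) = 0) := by

  set u : Fin g → ℂ := (1 / 2 : ℂ) • (p + r - s - q) with hu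
  set v : Fin g → ℂ := (1 / 2 : ℂ) • (p + s - r - q) with hv
  set w : Fin g → ℂ := (1 / 2 : ℂ) • (p + q - r - s) with hw
  have e1 : ∀ z : Fin g → ℂ, (z + u) + u = z + p + r - s - q := by
    intro z; funext i
    simp only [hu, Pi.add_apply, Pi.sub_apply, Pi.smul_apply, smul_eq_mul]; ring
  have e2 : ∀ z : Fin g → ℂ, (z + u) - u = z := by intro z; simp
  have e3 : ∀ z : Fin g → ℂ, (z + u) + v = z + p - q := by
    intro z; funext i
    simp only [hu, hv, Pi.add_apply, Pi.sub_apply, Pi.smul_apply, smul_eq_mul]; ring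
  have e4 : ∀ z : Fin g → ℂ, (z + u) - v = z + r - s := by
    intro z; funext i
    simp only [hu, hv, Pi.add_apply, Pi.sub_apply, Pi.smul_apply, smul_eq_mul]; ring
  have e5 : ∀ z : Fin g → ℂ, (z + u) + w = z + p - s := by
    intro z; funext i
    simp only [hu, hw, Pi.add_apply, Pi.sub_apply, Pi.smul_apply, smul_eq_mul]; ring
  have e6 : ∀ z : Fin g → ℂ, (z + u) - w = z + r - q := by
    intro z; funext i
    simp only [hu, hw, Pi.add_apply, Pi.sub_apply, Pi.smul_apply, smul_eq_mul]; ring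
  have key : ∀ z : Fin g → ℂ,
      A * (riemannTheta τ z * riemannTheta τ (z + p + r - s - q)) +
      B * (riemannTheta τ (z + p - q) * riemannTheta τ (z + r - s)) +
      C * (riemannTheta τ (z + p - s) * riemannTheta τ (z + r - q)) =
      ∑ e : Fin g → Bool,
        (A * theta2 τ e u + B * theta2 τ e v + C * theta2 τ e w) *
          theta2 τ e (z + u) := by
    intro z
    have h1 : riemannTheta τ z * riemannTheta τ (z + p + r - s - q) =
        ∑ e : Fin g → Bool, theta2 τ e (z + u) * theta2 τ e u := by
      rw [mul_comm, ← e1 z, ← hbil]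
      rw [e2 z]
    have h2 : riemannTheta τ (z + p - q) * riemannTheta τ (z + r - s) =
        ∑ e : Fin g → Bool, theta2 τ e (z + u) * theta2 τ e v := by
      rw [← e3 z, ← e4 z, hbil]
    have h3 : riemannTheta τ (z + p - s) * riemannTheta τ (z + r - q) =
        ∑ e : Fin g → Bool, theta2 τ e (z + u) * theta2 τ e w := by
      rw [← e5 z, ← e6 z, hbil]
    rw [h1, h2, h3, Finset.mul_sum, Finset.mul_sum, Finset.mul_sum,
      ← Finset.sum_add_distrib, ← Finset.sum_add_distrib]
    exact Finset.sum_congr rfl fun e _ => by ring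
  constructor
  · intro h e
    have hz : ∀ y : Fin g → ℂ,
        ∑ e : Fin g → Bool,
          (A * theta2 τ e u + B * theta2 τ e v + C * theta2 τ e w) *
            theta2 τ e y = 0 := by
      intro y
      have := (key (y - u)).symm.trans (h (y - u))
      rwa [show (y - u) + u = y by simp] at this
    have hfun : ∑ e : Fin g → Bool,
        (A * theta2 τ e u + B * theta2 τ e v + C * theta2 τ e w) •
          (theta2 τ e : (Fin g → ℂ) → ℂ) = 0 := by
      funext y
      simpa [Finset.sum_apply, Pi.smul_apply, smul_eq_mul] using hz y
    exact Fintype.linearIndependent_iff.mp hind _ hfun e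
  · intro h z
    rw [key z]
    exact Finset.sum_eq_zero fun e _ => by rw [h e, zero_mul]
end
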